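/- Fix n, d, s with 1 + ⌈d/n⌉ ≤ s ≤ d, and suppose all vertices of V_{(s-1)n} ∪ V_{sn} are infected. Then in d-neighbour bootstrap percolation every vertex of F_s = ⋃_{i=1}^{n-1} V_{(s-1)n+i} eventually becomes infected. -/

import Mathlib

/-- The grid `[n]^d = {1,...,n}^d`, embedded in `ℕ^d`. -/
def gridSet (n d : ℕ) : Set (Fin d → ℕ) := {v | ∀ i, 1 ≤ v i ∧ v i ≤ n}

/-- Adjacency: differ by 1 in exactly one coordinate. -/
def gridAdj {d : ℕ} (u v : Fin d → ℕ) : Prop :=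
  ∃ j, (u j = v j + 1 ∨ v j = u j + 1) ∧ ∀ i, i ≠ j → u i = v i

/-- One round of `r`-neighbour bootstrap percolation on `[n]^d`. -/
def bpStep (n d r : ℕ) (S : Set (Fin d → ℕ)) : Set (Fin d → ℕ) :=
  S ∪ {v ∈ gridSet n d | r ≤ {u ∈ S | gridAdj u v}.ncard}

/-- Infected set after `t` rounds, starting from `A`. -/
def infected (n d r : ℕ) (A : Set (Fin d → ℕ)) (t : ℕ) : Set (Fin d → ℕ) :=
  (bpStep n d r)^[t] A

/-- The closure of `A`: all eventually infected vertices. -/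
def bpClosure (n d r : ℕ) (A : Set (Fin d → ℕ)) : Set (Fin d → ℕ) :=
  ⋃ t, infected n d r A t

/-- `A` percolates if every grid vertex is eventually infected. -/
def percolates (n d r : ℕ) (A : Set (Fin d → ℕ)) : Prop :=
  gridSet n d ⊆ bpClosure n d r A

/-- Percolation time: least `t` with the whole grid infected. -/
noncomputable def percTime (n d r : ℕ) (A : Set (Fin d → ℕ)) : ℕ :=
  sInf {t | gridSet n d ⊆ infected n d r A t}

/-- `V_k`: grid vertices of coordinate sum `k`. -/
def hyperplane (n d k : ℕ) : Set (Fin d → ℕ) := {v ∈ gridSet n d | ∑ i, v i = k}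

/-- The "cyclic combination" set `A = ⋃_{i=1}^d V_{in}`. -/
def diagUnion (n d : ℕ) : Set (Fin d → ℕ) :=
  ⋃ i ∈ Finset.Icc 1 d, hyperplane n d (i * n)

/-- The slab `F_s = ⋃_{i=1}^{n-1} V_{(s-1)n+i}`. -/
def Fs (n d s : ℕ) : Set (Fin d → ℕ) :=
  ⋃ i ∈ Finset.Icc 1 (n - 1), hyperplane n d ((s - 1) * n + i)

/-- `t_v = Σ v_i − (s−1)n`. -/
def tv (n s : ℕ) {d : ℕ} (v : Fin d → ℕ) : ℕ := (∑ i, v i) - (s - 1) * n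

/-- The `j`-th standard basis vector. -/
def eVec (d : ℕ) (j : Fin d) : Fin d → ℕ := fun i => if i = j then 1 else 0

/-- `Pre(v) = {v + e_j : v_j ≤ t_v} ∪ {v − e_j : v_j > t_v}`. -/
def Pre (n s : ℕ) {d : ℕ} (v : Fin d → ℕ) : Set (Fin d → ℕ) :=
  {w | ∃ j, (v j ≤ tv n s v ∧ w = v + eVec d j) ∨ (tv n s v < v j ∧ w = v - eVec d j)}

/-!
For `v` in the slab put `t = t_v ∈ [1, n - 1]`. The `d` vertices of `Pre(v)` are neighbours of `v`,
and each of them lies either in `V_{(s-1)n} ∪ V_{sn}` or again in the slab, at level `t ± 1`. In the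
latter case the potential `∑ₖ vₖ² + (n - 1 - t)(n + t)` strictly drops: a step `+eⱼ` with `vⱼ ≤ t`
changes it by `2(vⱼ - t) - 1 < 0`, and a step `-eⱼ` with `vⱼ > t` by `2(t - vⱼ) + 1 < 0`. Strong
induction on the potential then infects the whole slab.
-/

section Bootstrap

variable {n d r : ℕ} {A S : Set (Fin d → ℕ)} {u v : Fin d → ℕ}

lemma infected_succ (t : ℕ) :
    infected n d r A (t + 1) = bpStep n d r (infected n d r A t) :=
  Function.iterate_succ_apply' _ _ _

lemma infected_monotone : Monotone (infected n d r A) :=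
  monotone_nat_of_le_succ fun t => by
    rw [infected_succ]
    exact Set.subset_union_left

lemma gridAdj_comm : gridAdj u v ↔ gridAdj v u := by
  simp only [gridAdj, eq_comm (a := u _), or_comm]

lemma le_add_one_of_gridAdj (h : gridAdj u v) : u ≤ v + 1 := by
  obtain ⟨j, hj, hoff⟩ := h
  intro i
  by_cases hi : i = j
  · subst hi
    simp only [Pi.add_apply, Pi.one_apply]
    omega
  · simp [hoff i hi]

lemma finite_setOf_gridAdj (v : Fin d → ℕ) : {u | gridAdj u v}.Finite :=
  (Set.finite_Iic (v + 1)).subset fun _ => le_add_one_of_gridAdj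

lemma exists_subset_infected_of_finite (hS : S.Finite) (hcl : S ⊆ bpClosure n d r A) :
    ∃ T, S ⊆ infected n d r A T := by
  obtain ⟨I, hI, hSI⟩ := Set.finite_subset_iUnion hS hcl
  obtain ⟨T, hT⟩ := hI.bddAbove
  exact ⟨T, hSI.trans (Set.iUnion₂_subset fun _ hi => infected_monotone (hT hi))⟩

lemma mem_bpClosure_of_neighbours (hv : v ∈ gridSet n d) (hr : r ≤ S.ncard)
    (hadj : ∀ u ∈ S, gridAdj u v) (hcl : S ⊆ bpClosure n d r A) : v ∈ bpClosure n d r A := by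
  have hS : S.Finite := (finite_setOf_gridAdj v).subset hadj
  obtain ⟨T, hT⟩ := exists_subset_infected_of_finite hS hcl
  have hnbrs : S ⊆ {u ∈ infected n d r A T | gridAdj u v} := fun u hu => ⟨hT hu, hadj u hu⟩
  have hcard := Set.ncard_le_ncard hnbrs ((finite_setOf_gridAdj v).subset fun _ hu => hu.2)
  refine Set.mem_iUnion.2 ⟨T + 1, ?_⟩
  rw [infected_succ]
  exact Or.inr ⟨hv, hr.trans hcard⟩

end Bootstrap

section UnitStep

variable {n d : ℕ} {v : Fin d → ℕ} {i j : Fin d}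

@[simp] lemma add_eVec_apply_self : (v + eVec d j) j = v j + 1 := by simp [eVec]

lemma add_eVec_apply_of_ne (h : i ≠ j) : (v + eVec d j) i = v i := by simp [eVec, h]

@[simp] lemma sub_eVec_apply_self : (v - eVec d j) j = v j - 1 := by simp [eVec]

lemma sub_eVec_apply_of_ne (h : i ≠ j) : (v - eVec d j) i = v i := by simp [eVec, h]

lemma sub_eVec_add_eVec (h : 1 ≤ v j) : v - eVec d j + eVec d j = v := by
  funext i
  by_cases hi : i = j
  · subst hi
    simp only [add_eVec_apply_self, sub_eVec_apply_self]
    omega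
  · rw [add_eVec_apply_of_ne hi, sub_eVec_apply_of_ne hi]

lemma sum_add_eVec : ∑ k, (v + eVec d j) k = ∑ k, v k + 1 := by
  simp [Finset.sum_add_distrib, eVec]

lemma sum_sq_add_eVec : ∑ k, (v + eVec d j) k ^ 2 = ∑ k, v k ^ 2 + (2 * v j + 1) := by
  have hpt : ∀ k, (v + eVec d j) k ^ 2 = v k ^ 2 + if j = k then 2 * v j + 1 else 0 := by
    intro k
    by_cases hk : k = j
    · subst hk
      simp only [add_eVec_apply_self, if_true]
      ring
    · simp [add_eVec_apply_of_ne hk, Ne.symm hk]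
  simp only [hpt, Finset.sum_add_distrib, Finset.sum_ite_eq, Finset.mem_univ, if_true]

lemma gridAdj_add_eVec : gridAdj (v + eVec d j) v :=
  ⟨j, Or.inl add_eVec_apply_self, fun _ hi => add_eVec_apply_of_ne hi⟩

lemma gridAdj_sub_eVec (h : 1 ≤ v j) : gridAdj (v - eVec d j) v := by
  rw [gridAdj_comm]
  nth_rw 1 [← sub_eVec_add_eVec h]
  exact gridAdj_add_eVec

lemma add_eVec_mem_gridSet (hv : v ∈ gridSet n d) (h : v j < n) : v + eVec d j ∈ gridSet n d := by
  intro i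
  by_cases hi : i = j
  · subst hi
    simp only [add_eVec_apply_self]
    omega
  · rw [add_eVec_apply_of_ne hi]
    exact hv i

lemma sub_eVec_mem_gridSet (hv : v ∈ gridSet n d) (h : 1 < v j) : v - eVec d j ∈ gridSet n d := by
  intro i
  by_cases hi : i = j
  · subst hi
    have := hv i
    simp only [sub_eVec_apply_self]
    omega
  · rw [sub_eVec_apply_of_ne hi]
    exact hv i

end UnitStep

section Pre

variable {n s d : ℕ} {v w : Fin d → ℕ}

lemma Pre_eq_range :
    Pre n s v = Set.range fun j => if v j ≤ tv n s v then v + eVec d j else v - eVec d j := by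
  ext w
  constructor
  · rintro ⟨j, ⟨h, rfl⟩ | ⟨h, rfl⟩⟩
    · exact ⟨j, if_pos h⟩
    · exact ⟨j, if_neg (not_le.2 h)⟩
  · rintro ⟨j, rfl⟩
    refine ⟨j, ?_⟩
    by_cases h : v j ≤ tv n s v
    · exact Or.inl ⟨h, if_pos h⟩
    · exact Or.inr ⟨not_le.1 h, if_neg h⟩

lemma ncard_Pre : (Pre n s v).ncard = d := by
  rw [Pre_eq_range, Set.ncard_range_of_injective, Nat.card_eq_fintype_card, Fintype.card_fin]
  intro j k hjk
  by_contra hne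
  have hother : (if v k ≤ tv n s v then v + eVec d k else v - eVec d k) j = v j := by
    split_ifs
    exacts [add_eVec_apply_of_ne hne, sub_eVec_apply_of_ne hne]
  have hself : (if v j ≤ tv n s v then v + eVec d j else v - eVec d j) j ≠ v j := by
    split_ifs with h
    · simp only [add_eVec_apply_self]
      omega
    · simp only [sub_eVec_apply_self]
      omega
  exact hself ((congrFun hjk j).trans hother)

lemma gridAdj_of_mem_Pre (hw : w ∈ Pre n s v) : gridAdj w v := by
  obtain ⟨j, ⟨-, rfl⟩ | ⟨h, rfl⟩⟩ := hw
  · exact gridAdj_add_eVec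
  · exact gridAdj_sub_eVec (by omega)

end Pre

section Slab

variable {n d s : ℕ} {v w : Fin d → ℕ} {j : Fin d}

lemma mem_Fs_iff :
    v ∈ Fs n d s ↔ v ∈ gridSet n d ∧ (s - 1) * n < ∑ k, v k ∧ ∑ k, v k < (s - 1) * n + n := by
  simp only [Fs, hyperplane, Set.mem_iUnion, Finset.mem_Icc, Set.mem_ofPred_eq, exists_prop]
  constructor
  · rintro ⟨i, hi, hv, hsum⟩
    exact ⟨hv, by omega, by omega⟩
  · rintro ⟨hv, hlo, hhi⟩
    exact ⟨∑ k, v k - (s - 1) * n, by omega, hv, by omega⟩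

def potential (n : ℕ) {d : ℕ} (v : Fin d → ℕ) (t : ℕ) : ℕ :=
  ∑ k, v k ^ 2 + (n - 1 - t) * (n + t)

lemma potential_add_eVec {t : ℕ} (ht : t + 2 ≤ n) :
    potential n (v + eVec d j) (t + 1) + 2 * t + 1 = potential n v t + 2 * v j := by
  obtain ⟨m, rfl⟩ := Nat.exists_eq_add_of_le ht
  simp only [potential, sum_sq_add_eVec]
  rw [show t + 2 + m - 1 - (t + 1) = m by omega, show t + 2 + m - 1 - t = m + 1 by omega]
  ring

lemma add_eVec_mem_hyperplane_or_mem_Fs (hs : 1 ≤ s) (hv : v ∈ Fs n d s)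
    (hj : v j ≤ tv n s v) :
    v + eVec d j ∈ hyperplane n d (s * n) ∨ v + eVec d j ∈ Fs n d s ∧
      potential n (v + eVec d j) (tv n s (v + eVec d j)) < potential n v (tv n s v) := by
  obtain ⟨hgrid, hlo, hhi⟩ := mem_Fs_iff.1 hv
  have hsn : s * n = (s - 1) * n + n := by
    obtain ⟨s, rfl⟩ := Nat.exists_eq_add_of_le' hs
    simp [add_mul]
  have hsum : ∑ k, (v + eVec d j) k = ∑ k, v k + 1 := sum_add_eVec
  unfold tv at hj
  have hw : v + eVec d j ∈ gridSet n d := add_eVec_mem_gridSet hgrid (by omega)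
  by_cases htop : ∑ k, v k + 1 = (s - 1) * n + n
  · exact Or.inl ⟨hw, by omega⟩
  · refine Or.inr ⟨mem_Fs_iff.2 ⟨hw, by omega, by omega⟩, ?_⟩
    have key := potential_add_eVec (n := n) (v := v) (j := j) (t := tv n s v) (by unfold tv; omega)
    rw [show tv n s (v + eVec d j) = tv n s v + 1 by unfold tv; omega]
    unfold tv at key ⊢
    omega

lemma sub_eVec_mem_hyperplane_or_mem_Fs (hv : v ∈ Fs n d s) (hj : tv n s v < v j) :
    v - eVec d j ∈ hyperplane n d ((s - 1) * n) ∨ v - eVec d j ∈ Fs n d s ∧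
      potential n (v - eVec d j) (tv n s (v - eVec d j)) < potential n v (tv n s v) := by
  obtain ⟨hgrid, hlo, hhi⟩ := mem_Fs_iff.1 hv
  set w := v - eVec d j
  have hwv : w + eVec d j = v := sub_eVec_add_eVec (by omega)
  have hsum : ∑ k, w k + 1 = ∑ k, v k := by rw [← sum_add_eVec, hwv]
  have hwj : w j = v j - 1 := sub_eVec_apply_self
  unfold tv at hj
  have hw : w ∈ gridSet n d := sub_eVec_mem_gridSet hgrid (by omega)
  by_cases hbot : ∑ k, v k = (s - 1) * n + 1
  · exact Or.inl ⟨hw, by omega⟩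
  · refine Or.inr ⟨mem_Fs_iff.2 ⟨hw, by omega, by omega⟩, ?_⟩
    have key := potential_add_eVec (n := n) (v := w) (j := j) (t := tv n s w) (by unfold tv; omega)
    rw [hwv, show tv n s w + 1 = tv n s v by unfold tv; omega] at key
    unfold tv at key ⊢
    omega

lemma mem_hyperplane_or_mem_Fs_of_mem_Pre (hs : 1 ≤ s) (hv : v ∈ Fs n d s)
    (hw : w ∈ Pre n s v) :
    w ∈ hyperplane n d ((s - 1) * n) ∪ hyperplane n d (s * n) ∨
      w ∈ Fs n d s ∧ potential n w (tv n s w) < potential n v (tv n s v) := by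
  obtain ⟨j, ⟨hj, rfl⟩ | ⟨hj, rfl⟩⟩ := hw
  · exact (add_eVec_mem_hyperplane_or_mem_Fs hs hv hj).imp Or.inr id
  · exact (sub_eVec_mem_hyperplane_or_mem_Fs hv hj).imp Or.inl id

end Slab

theorem slab_infected_general (n d s : ℕ)
    (hs1 : 1 + (d + n - 1) / n ≤ s) :
    Fs n d s ⊆
      bpClosure n d d (hyperplane n d ((s - 1) * n) ∪ hyperplane n d (s * n)) := by
  have hs : 1 ≤ s := (Nat.le_add_right 1 _).trans hs1
  intro v hv
  induction hN : potential n v (tv n s v) using Nat.strong_induction_on generalizing v with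
  | _ N ih =>
  refine mem_bpClosure_of_neighbours (S := Pre n s v) (mem_Fs_iff.1 hv).1 ncard_Pre.ge
    (fun _ => gridAdj_of_mem_Pre) fun w hw => ?_
  rcases mem_hyperplane_or_mem_Fs_of_mem_Pre hs hv hw with hA | ⟨hwF, hlt⟩
  · exact Set.mem_iUnion.2 ⟨0, hA⟩
  · exact ih _ (hN ▸ hlt) hwF rfl

theorem slab_infected (n d s : ℕ) (hn : 1 ≤ n)
    (hs1 : 1 + (d + n - 1) / n ≤ s) (hs2 : s ≤ d) :
    Fs n d s ⊆
      bpClosure n d d (hyperplane n d ((s - 1) * n) ∪ hyperplane n d (s * n)) :=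
  slab_infected_general n d s hs1
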